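/- arXiv:2110.07346 — 3 statements merged into one kernel-verified Lean document; each statement's English description precedes it below -/
import Mathlib

section
/- Positional determinacy of mean-payoff games: for every game G = (V, E, w, V_Min, V_Max) with integer weights, there exist a strategy σ₀ for Min and a strategy τ₀ for Max such that for every vertex v ∈ V, sup over infinite paths π from v consistent with σ₀ of MP(w(π)) = inf over Min strategies σ of sup over infinite paths π from v consistent with σ of MP(w(π)) = sup over Max strategies τ of inf over infinite paths π from v consistent with τ of MP(w(π)) = inf over infinite paths π from v consistent with τ₀ of MP(w(π)). -/
attribute [local instance] Classical.propDecidable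

/-- A game: a directed graph `E` on vertex set `V` with no sink, edge weights `wt : V → V → R`,
and a partition of the vertices into those belonging to Min (`isMin`) and to Max (the rest). -/
structure Game (V : Type) (R : Type) where
  E : V → V → Prop
  wt : V → V → R
  isMin : V → Prop
  nosink : ∀ v, ∃ u, E v u

namespace Game

variable {V : Type} {R : Type}

/-- A strategy for Min: a choice of an outgoing edge at every Min vertex. -/
def MinStrat (G : Game V R) : Type := {σ : V → V // ∀ v, G.isMin v → G.E v (σ v)}

/-- A strategy for Max: a choice of an outgoing edge at every Max vertex. -/
def MaxStrat (G : Game V R) : Type := {τ : V → V // ∀ v, ¬ G.isMin v → G.E v (τ v)}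

/-- An infinite path in the graph. -/
def IsPath (G : Game V R) (π : ℕ → V) : Prop := ∀ i, G.E (π i) (π (i + 1))

/-- Consistency of an infinite path with a Min strategy. -/
def ConsMin (G : Game V R) (σ : G.MinStrat) (π : ℕ → V) : Prop :=
  ∀ i, G.isMin (π i) → π (i + 1) = σ.1 (π i)

/-- Consistency of an infinite path with a Max strategy. -/
def ConsMax (G : Game V R) (τ : G.MaxStrat) (π : ℕ → V) : Prop :=
  ∀ i, ¬ G.isMin (π i) → π (i + 1) = τ.1 (π i)

/-- Infinite paths starting in `v` consistent with the Min strategy `σ`. -/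
def PlaysMin (G : Game V R) (σ : G.MinStrat) (v : V) : Type :=
  {π : ℕ → V // π 0 = v ∧ G.IsPath π ∧ G.ConsMin σ π}

/-- Infinite paths starting in `v` consistent with the Max strategy `τ`. -/
def PlaysMax (G : Game V R) (τ : G.MaxStrat) (v : V) : Type :=
  {π : ℕ → V // π 0 = v ∧ G.IsPath π ∧ G.ConsMax τ π}

/-- The sequence of weights along an infinite path. -/
def wseq (G : Game V R) (π : ℕ → V) : ℕ → R := fun i => G.wt (π i) (π (i + 1))

/-- Embedding of `ℤ ∪ {∞}` into the extended reals. -/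
noncomputable def toE (x : WithTop ℤ) : EReal :=
  if h : x = ⊤ then ⊤ else (((x.untop h : ℤ) : ℝ) : EReal)

/-- Embedding of `ℕ ∪ {∞}` into the extended reals. -/
noncomputable def enatToE (x : ENat) : EReal :=
  if x = ⊤ then ⊤ else ((x.toNat : ℝ) : EReal)

/-- Conversion `ℤ ∪ {∞} → ℕ ∪ {∞}` (exact on non-negative values). -/
noncomputable def wToN (x : WithTop ℤ) : ENat :=
  if h : x = ⊤ then ⊤ else ((x.untop h).toNat : ENat)

/-- The mean-payoff valuation `MP(w₀w₁⋯) = limsup_k (1/k) ∑_{i<k} w_i`. -/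
noncomputable def MPv (w : ℕ → ℤ) : EReal :=
  Filter.limsup
    (fun k : ℕ => ((((∑ i ∈ Finset.range k, w i : ℤ) : ℝ) / (k : ℝ) : ℝ) : EReal))
    Filter.atTop

/-- The energy valuation `En(w₀w₁⋯) = sup_k ∑_{i<k} w_i` (weights given in `EReal`). -/
noncomputable def En (w : ℕ → EReal) : EReal :=
  ⨆ k : ℕ, ∑ i ∈ Finset.range k, w i

/-- The positive-energy valuation `En⁺(w₀w₁⋯) = ∑_{i<k¬} w_i ∈ ℕ ∪ {∞}` where `k¬` is the
first index of a negative weight (the whole, possibly infinite, sum if no weight is negative). -/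
noncomputable def EnP (w : ℕ → WithTop ℤ) : ENat :=
  if h : ∃ k, w k < 0 then ∑ i ∈ Finset.range (Nat.find h), wToN (w i)
  else ⨆ k : ℕ, ∑ i ∈ Finset.range k, wToN (w i)

/-- The mean-payoff value of a vertex:
`MP_G(v) = inf over Min strategies σ of sup over plays π from v consistent with σ of MP(w(π))`. -/
noncomputable def MPVal (G : Game V ℤ) (v : V) : EReal :=
  ⨅ σ : G.MinStrat, ⨆ π : G.PlaysMin σ v, MPv (G.wseq π.1)

/-- The energy value of a vertex. -/
noncomputable def EnVal (G : Game V (WithTop ℤ)) (v : V) : EReal :=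
  ⨅ σ : G.MinStrat, ⨆ π : G.PlaysMin σ v, En (fun i => toE (G.wseq π.1 i))

/-- The positive-energy value of a vertex. -/
noncomputable def EnPVal (G : Game V (WithTop ℤ)) (v : V) : ENat :=
  ⨅ σ : G.MinStrat, ⨆ π : G.PlaysMin σ v, EnP (G.wseq π.1)

/-- Lift a game with integer weights to a game with weights in `ℤ ∪ {∞}`. -/
def liftZ (G : Game V ℤ) : Game V (WithTop ℤ) :=
  { E := G.E, wt := fun u v => (G.wt u v : WithTop ℤ), isMin := G.isMin, nosink := G.nosink }

/-- The `φ`-modified weight: `w_φ(v,v') = w(v,v') + φ(v') − φ(v)` when `w(v,v')`, `φ(v)`, `φ(v')`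
are all finite, and `∞` otherwise. -/
noncomputable def modWt (w : V → V → WithTop ℤ) (φ : V → ENat) (u v : V) : WithTop ℤ :=
  if w u v = ⊤ ∨ φ u = ⊤ ∨ φ v = ⊤ then ⊤
  else (((w u v).untopD 0 + ((φ v).toNat : ℤ) - ((φ u).toNat : ℤ) : ℤ) : WithTop ℤ)

/-- The `φ`-modified game `G_φ`. -/
noncomputable def modify (G : Game V (WithTop ℤ)) (φ : V → ENat) : Game V (WithTop ℤ) :=
  { G with wt := modWt G.wt φ }

/-- `π 0 → π 1 → ⋯ → π k` is a simple cycle: `k ≥ 1`, consecutive edges, `π k = π 0`,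
and `π 0, …, π (k-1)` pairwise distinct. -/
def IsSimpleCycle (G : Game V R) (π : ℕ → V) (k : ℕ) : Prop :=
  1 ≤ k ∧ (∀ i < k, G.E (π i) (π (i + 1))) ∧ π k = π 0 ∧
    ∀ i < k, ∀ j < k, π i = π j → i = j

/-- A game is simple if every simple cycle has nonzero sum of weights. -/
def IsSimpleR [AddCommMonoid R] (G : Game V R) : Prop :=
  ∀ π k, IsSimpleCycle G π k → (∑ i ∈ Finset.range k, G.wt (π i) (π (i + 1))) ≠ 0

/-- `W = max_{e ∈ E} |w(e)|`. -/
noncomputable def maxW (G : Game V ℤ) [Fintype V] : ℕ :=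
  Finset.sup Finset.univ (fun p : V × V => if G.E p.1 p.2 then (G.wt p.1 p.2).natAbs else 0)

/-- The ESL iteration: `G₀ = G` and `G_{j+1} = (G_j)_{φ_j}` where `φ_j = En⁺_{G_j}`. -/
noncomputable def esl (G : Game V (WithTop ℤ)) : ℕ → Game V (WithTop ℤ)
  | 0 => G
  | j + 1 => modify (esl G j) (EnPVal (esl G j))

/-- The accumulated ESL potential `Φ_j = φ₀ + ⋯ + φ_{j−1}`. -/
noncomputable def eslPhi (G : Game V (WithTop ℤ)) (j : ℕ) (v : V) : ENat :=
  ∑ i ∈ Finset.range j, EnPVal (esl G i) v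

/-- The set of vertices from which Min can ensure to immediately visit a negative-weight edge:
Min vertices with some negative outgoing edge, and Max vertices all of whose outgoing edges
are negative. -/
def NegSet (G : Game V (WithTop ℤ)) : Set V :=
  {v | (G.isMin v ∧ ∃ u, G.E v u ∧ G.wt v u < 0) ∨
       (¬ G.isMin v ∧ ∀ u, G.E v u → G.wt v u < 0)}

end Game

/-!
Discounting by a factor `l < 1` turns Shapley's operator
`(T_l f)(v) = min (at Min vertices) or max (at Max vertices) over edges v → u of w(v,u) + l f(u)`
into an `l`-contraction of `V → ℝ`; the optima in the equation `f_l = T_l f_l` of its fixed point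
are attained by a successor map `s_l`, and `(1 - l) ‖f_l‖ ≤ W`. As `l → 1`, one map `s` equals
`s_l` for infinitely many `l`, and along those a subsequence of `(1 - l) f_l` converges to some
`μ`. In the limit `μ` is constant along `s`, does not decrease along edges leaving Min vertices
and does not increase along edges leaving Max vertices. On a play following `s` at Min vertices
`μ` therefore never increases, and summing `w_i ≤ f_l(π_i) - l f_l(π_{i+1})` telescopes to
`∑_{i<K} w_i ≤ 2 ‖f_l‖ + K (μ(π_0) + ε_l)` with `ε_l → 0`, so the mean payoff is at most
`μ(π_0)`. Symmetrically it is at least `μ(π_0)` on plays following `s` at Max vertices, and weak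
duality closes the chain of inequalities.
-/

open Filter Topology

theorem sum_range_le_of_le_sub_mul {w x : ℕ → ℝ} {l D M : ℝ}
    (hstep : ∀ i, w i ≤ x i - l * x (i + 1)) (hterm : ∀ i, (1 - l) * x (i + 1) ≤ M)
    (hx : ∀ i, |x i| ≤ D) (K : ℕ) :
    ∑ i ∈ Finset.range K, w i ≤ 2 * D + K * M := by
  have htelescope : ∑ i ∈ Finset.range K, (x i - l * x (i + 1)) =
      x 0 - x K + ∑ i ∈ Finset.range K, (1 - l) * x (i + 1) := by
    rw [← Finset.sum_range_sub' x K, ← Finset.sum_add_distrib]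
    exact Finset.sum_congr rfl fun i _ => by ring
  have hterms : ∑ i ∈ Finset.range K, (1 - l) * x (i + 1) ≤ K * M := by
    simpa using Finset.sum_le_sum fun i (_ : i ∈ Finset.range K) => hterm i
  calc ∑ i ∈ Finset.range K, w i ≤ ∑ i ∈ Finset.range K, (x i - l * x (i + 1)) :=
        Finset.sum_le_sum fun i _ => hstep i
    _ ≤ 2 * D + K * M := by
        rw [htelescope]
        linarith [abs_le.1 (hx 0), abs_le.1 (hx K)]

theorem le_sum_range_of_sub_mul_le {w x : ℕ → ℝ} {l D M : ℝ}
    (hstep : ∀ i, x i - l * x (i + 1) ≤ w i) (hterm : ∀ i, M ≤ (1 - l) * x (i + 1))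
    (hx : ∀ i, |x i| ≤ D) (K : ℕ) :
    -(2 * D) + K * M ≤ ∑ i ∈ Finset.range K, w i := by
  have := sum_range_le_of_le_sub_mul (w := -w) (x := -x) (l := l) (M := -M)
    (fun i => by simp only [Pi.neg_apply]; linarith [hstep i])
    (fun i => by simp only [Pi.neg_apply]; linarith [hterm i]) (fun i => by simpa using hx i) K
  simp only [Pi.neg_apply, Finset.sum_neg_distrib] at this
  linarith

theorem tendsto_div_natCast_add (C M : ℝ) :
    Tendsto (fun K : ℕ => ((C / K + M : ℝ) : EReal)) atTop (𝓝 (M : EReal)) :=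
  (continuous_coe_real_ereal.tendsto M).comp <| by
    simpa using (tendsto_const_div_atTop_nhds_zero_nat C).add_const M

theorem le_coe_of_forall_le_coe_add {x : EReal} {c : ℝ} {d : ℕ → ℝ}
    (hd : Tendsto d atTop (𝓝 0)) (h : ∀ k, x ≤ ((c + d k : ℝ) : EReal)) : x ≤ c :=
  ge_of_tendsto ((continuous_coe_real_ereal.tendsto c).comp (by simpa using hd.const_add c))
    (Eventually.of_forall h)

theorem coe_le_of_forall_coe_sub_le {x : EReal} {c : ℝ} {d : ℕ → ℝ}
    (hd : Tendsto d atTop (𝓝 0)) (h : ∀ k, ((c - d k : ℝ) : EReal) ≤ x) : (c : EReal) ≤ x :=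
  le_of_tendsto ((continuous_coe_real_ereal.tendsto c).comp (by simpa using hd.const_sub c))
    (Eventually.of_forall h)

namespace Game

theorem MPv_le_of_sum_le {w : ℕ → ℤ} {C M : ℝ}
    (h : ∀ K : ℕ, (∑ i ∈ Finset.range K, w i : ℤ) ≤ C + K * M) : MPv w ≤ M := by
  refine (limsup_le_limsup ?_).trans (tendsto_div_natCast_add C M).limsup_eq.le
  filter_upwards [eventually_ne_atTop 0] with K hK
  rw [EReal.coe_le_coe_iff, ← mul_div_cancel_left₀ M (Nat.cast_ne_zero.2 hK : (K : ℝ) ≠ 0),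
    ← add_div]
  gcongr
  exact h K

theorem le_MPv_of_le_sum {w : ℕ → ℤ} {C M : ℝ}
    (h : ∀ K : ℕ, -C + K * M ≤ (∑ i ∈ Finset.range K, w i : ℤ)) : (M : EReal) ≤ MPv w := by
  refine (tendsto_div_natCast_add (-C) M).limsup_eq.ge.trans (limsup_le_limsup ?_)
  filter_upwards [eventually_ne_atTop 0] with K hK
  rw [EReal.coe_le_coe_iff, ← mul_div_cancel_left₀ M (Nat.cast_ne_zero.2 hK : (K : ℝ) ≠ 0),
    ← add_div]
  gcongr
  exact h K

variable {V R : Type}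

section Duality

noncomputable def followBoth (G : Game V R) (σ : G.MinStrat) (τ : G.MaxStrat) (v : V) : V :=
  if G.isMin v then σ.1 v else τ.1 v

theorem exists_play_consMin_consMax (G : Game V R) (σ : G.MinStrat) (τ : G.MaxStrat) (v : V) :
    ∃ π : ℕ → V, π 0 = v ∧ G.IsPath π ∧ G.ConsMin σ π ∧ G.ConsMax τ π := by
  refine ⟨fun i => (G.followBoth σ τ)^[i] v, rfl, fun i => ?_, fun i hi => ?_, fun i hi => ?_⟩
  · simp only [Function.iterate_succ_apply', followBoth]
    split_ifs with h
    exacts [σ.2 _ h, τ.2 _ h]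
  · simp only [Function.iterate_succ_apply', followBoth, if_pos hi]
  · simp only [Function.iterate_succ_apply', followBoth, if_neg hi]

theorem iSup_iInf_le_iInf_iSup {α : Type*} [CompleteLattice α] (G : Game V R)
    (val : (ℕ → V) → α) (v : V) :
    ⨆ τ : G.MaxStrat, ⨅ π : G.PlaysMax τ v, val π.1 ≤
      ⨅ σ : G.MinStrat, ⨆ π : G.PlaysMin σ v, val π.1 := by
  refine le_iInf fun σ => iSup_le fun τ => ?_
  obtain ⟨π, h0, hpath, hσ, hτ⟩ := G.exists_play_consMin_consMax σ τ v
  exact (iInf_le _ ⟨π, h0, hpath, hτ⟩).trans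
    (le_iSup (fun π : G.PlaysMin σ v => val π.1) ⟨π, h0, hpath, hσ⟩)

end Duality

section Discounted

variable [Fintype V]

noncomputable def succs (G : Game V R) (v : V) : Finset V := Finset.univ.filter (G.E v)

@[simp] theorem mem_succs {G : Game V R} {v u : V} : u ∈ G.succs v ↔ G.E v u := by
  simp [succs]

theorem succs_nonempty (G : Game V R) (v : V) : (G.succs v).Nonempty :=
  (G.nosink v).imp fun _ => mem_succs.2

theorem abs_wt_le_maxW (G : Game V ℤ) {v u : V} (h : G.E v u) : |(G.wt v u : ℝ)| ≤ G.maxW := by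
  have := Finset.le_sup (f := fun p : V × V => if G.E p.1 p.2 then (G.wt p.1 p.2).natAbs else 0)
    (Finset.mem_univ (v, u))
  rw [← Int.cast_abs, Int.abs_eq_natAbs]
  exact_mod_cast (if_pos h).symm.trans_le this

noncomputable def bellman (G : Game V ℤ) (l : ℝ) (f : V → ℝ) (v : V) : ℝ :=
  if G.isMin v then (G.succs v).inf' (G.succs_nonempty v) fun u => G.wt v u + l * f u
  else (G.succs v).sup' (G.succs_nonempty v) fun u => G.wt v u + l * f u

variable {G : Game V ℤ} {l : ℝ} {f g : V → ℝ} {v u : V}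

theorem bellman_le_of_isMin (hv : G.isMin v) (hu : G.E v u) :
    G.bellman l f v ≤ G.wt v u + l * f u := by
  rw [bellman, if_pos hv]
  exact Finset.inf'_le _ (mem_succs.2 hu)

theorem le_bellman_of_not_isMin (hv : ¬ G.isMin v) (hu : G.E v u) :
    G.wt v u + l * f u ≤ G.bellman l f v := by
  rw [bellman, if_neg hv]
  exact Finset.le_sup' (fun u => (G.wt v u : ℝ) + l * f u) (mem_succs.2 hu)

theorem exists_bellman_eq (G : Game V ℤ) (l : ℝ) (f : V → ℝ) (v : V) :
    ∃ u, G.E v u ∧ G.bellman l f v = G.wt v u + l * f u := by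
  unfold bellman
  split_ifs
  · obtain ⟨u, hu, h⟩ := Finset.exists_mem_eq_inf' (G.succs_nonempty v)
      fun u => (G.wt v u : ℝ) + l * f u
    exact ⟨u, mem_succs.1 hu, h⟩
  · obtain ⟨u, hu, h⟩ := Finset.exists_mem_eq_sup' (G.succs_nonempty v)
      fun u => (G.wt v u : ℝ) + l * f u
    exact ⟨u, mem_succs.1 hu, h⟩

theorem bellman_le_add (hl : 0 ≤ l) {c : ℝ} (h : ∀ u, f u ≤ g u + c) (v : V) :
    G.bellman l f v ≤ G.bellman l g v + l * c := by
  have hstep : ∀ u, (G.wt v u : ℝ) + l * f u ≤ G.wt v u + l * g u + l * c := fun u => by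
    nlinarith [h u]
  unfold bellman
  split_ifs
  · refine sub_le_iff_le_add.1 <| Finset.le_inf' _ _ fun u hu => sub_le_iff_le_add.2 ?_
    exact (Finset.inf'_le _ hu).trans (hstep u)
  · refine Finset.sup'_le _ _ fun u hu => (hstep u).trans ?_
    gcongr
    exact Finset.le_sup' (fun u => (G.wt v u : ℝ) + l * g u) hu

theorem bellman_contractingWith (G : Game V ℤ) (hl₀ : 0 ≤ l) (hl₁ : l < 1) :
    ContractingWith ⟨l, hl₀⟩ (G.bellman l) := by
  refine ⟨hl₁, lipschitzWith_iff_dist_le_mul.2 fun f g => ?_⟩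
  have hdist : ∀ f g : V → ℝ, ∀ u, f u ≤ g u + dist f g := fun f g u =>
    sub_le_iff_le_add'.1 <| (le_abs_self _).trans <|
      (Real.dist_eq _ _).ge.trans (dist_le_pi_dist f g u)
  change _ ≤ l * _
  rw [dist_pi_le_iff (by positivity)]
  refine fun v => abs_sub_le_iff.2 ⟨?_, ?_⟩
  · linarith [bellman_le_add (G := G) hl₀ (hdist f g) v]
  · have h := bellman_le_add (G := G) hl₀ (hdist g f) v
    rw [dist_comm] at h
    linarith

theorem exists_isFixedPt_bellman (G : Game V ℤ) (hl₀ : 0 ≤ l) (hl₁ : l < 1) :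
    ∃ f, Function.IsFixedPt (G.bellman l) f :=
  ⟨_, (G.bellman_contractingWith hl₀ hl₁).fixedPoint_isFixedPt⟩

theorem mul_norm_le_maxW_of_isFixedPt (hl₀ : 0 ≤ l) (hf : Function.IsFixedPt (G.bellman l) f) :
    (1 - l) * ‖f‖ ≤ G.maxW := by
  suffices ‖f‖ ≤ G.maxW + l * ‖f‖ by linarith
  refine (pi_norm_le_iff_of_nonneg (by positivity)).2 fun v => ?_
  obtain ⟨u, hu, hv⟩ := G.exists_bellman_eq l f v
  rw [← congrFun hf v, hv, Real.norm_eq_abs]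
  refine (abs_add_le _ _).trans (add_le_add (G.abs_wt_le_maxW hu) ?_)
  rw [abs_mul, abs_of_nonneg hl₀]
  exact mul_le_mul_of_nonneg_left (norm_le_pi_norm f u) hl₀

end Discounted

section VanishingDiscount

variable [Fintype V]

structure VanishingDiscountLimit (G : Game V ℤ) where
  l : ℕ → ℝ
  f : ℕ → V → ℝ
  s : V → V
  value : V → ℝ
  l_lt_one : ∀ k, l k < 1
  tendsto_l : Tendsto l atTop (𝓝 1)
  isFixedPt : ∀ k, Function.IsFixedPt (G.bellman (l k)) (f k)
  edge_s : ∀ v, G.E v (s v)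
  f_eq_s : ∀ k v, f k v = G.wt v (s v) + l k * f k (s v)
  tendsto_f : Tendsto (fun k => (1 - l k) • f k) atTop (𝓝 value)

theorem nonempty_vanishingDiscountLimit (G : Game V ℤ) : Nonempty G.VanishingDiscountLimit := by
  set l : ℕ → ℝ := fun n => 1 - 1 / (n + 1) with hl_def
  have hl₀ : ∀ n, 0 ≤ l n := fun n =>
    sub_nonneg.2 <| (div_le_one (by positivity)).2 (by simp)
  have hl₁ : ∀ n, l n < 1 := fun n => sub_lt_self 1 (by positivity)
  choose f hf using fun n => G.exists_isFixedPt_bellman (hl₀ n) (hl₁ n)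
  choose s hs using fun n => G.exists_bellman_eq (l n) (f n)
  obtain ⟨y, hy⟩ : ∃ y, ∃ᶠ n in atTop, s n = y :=
    frequently_exists.1 (Frequently.of_forall fun n => ⟨s n, rfl⟩)
  obtain ⟨φ, hφ, hφy⟩ := extraction_of_frequently_atTop hy
  have hbdd : ∀ n, (1 - l n) • f n ∈ Metric.closedBall (0 : V → ℝ) G.maxW := fun n => by
    rw [mem_closedBall_zero_iff, norm_smul, Real.norm_of_nonneg (sub_nonneg.2 (hl₁ n).le)]
    exact mul_norm_le_maxW_of_isFixedPt (hl₀ n) (hf n)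
  obtain ⟨μ, -, ψ, hψ, hμ⟩ := tendsto_subseq_of_bounded Metric.isBounded_closedBall
    fun k => hbdd (φ k)
  have hl : Tendsto l atTop (𝓝 1) := by
    simpa [hl_def] using tendsto_one_div_add_atTop_nhds_zero_nat.const_sub (1 : ℝ)
  refine ⟨{ l := l ∘ φ ∘ ψ, f := f ∘ φ ∘ ψ, s := y, value := μ
            l_lt_one := fun k => hl₁ _
            tendsto_l := hl.comp (hφ.comp hψ).tendsto_atTop
            isFixedPt := fun k => hf _
            edge_s := fun v => ?_, f_eq_s := fun k v => ?_, tendsto_f := hμ }⟩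
  · exact hφy 0 ▸ (hs (φ 0) v).1
  · simp only [Function.comp_apply, ← hφy (ψ k)]
    exact (congrFun (hf _) v).symm.trans (hs _ v).2

namespace VanishingDiscountLimit

variable {G : Game V ℤ} (L : G.VanishingDiscountLimit) {v u : V} {π : ℕ → V}

theorem tendsto_apply (v : V) :
    Tendsto (fun k => (1 - L.l k) * L.f k v) atTop (𝓝 (L.value v)) :=
  tendsto_pi_nhds.1 L.tendsto_f v

theorem abs_sub_value_le (k : ℕ) (v : V) :
    |(1 - L.l k) * L.f k v - L.value v| ≤ dist ((1 - L.l k) • L.f k) L.value :=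
  (Real.dist_eq _ _).ge.trans (dist_le_pi_dist ((1 - L.l k) • L.f k) L.value v)

theorem tendsto_dist : Tendsto (fun k => dist ((1 - L.l k) • L.f k) L.value) atTop (𝓝 0) :=
  tendsto_iff_dist_tendsto_zero.1 L.tendsto_f

theorem tendsto_step (v u : V) :
    Tendsto (fun k => (1 - L.l k) * G.wt v u + L.l k * ((1 - L.l k) * L.f k u)) atTop
      (𝓝 (L.value u)) := by
  simpa using (((tendsto_const_nhds (x := (1 : ℝ))).sub L.tendsto_l).mul_const (G.wt v u : ℝ)).add
    (L.tendsto_l.mul (L.tendsto_apply u))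

theorem value_le_of_le_step (h : ∀ k, L.f k v ≤ G.wt v u + L.l k * L.f k u) :
    L.value v ≤ L.value u := by
  refine le_of_tendsto_of_tendsto' (L.tendsto_apply v) (L.tendsto_step v u) fun k => ?_
  nlinarith [h k, L.l_lt_one k]

theorem value_le_of_step_le (h : ∀ k, G.wt v u + L.l k * L.f k u ≤ L.f k v) :
    L.value u ≤ L.value v := by
  refine le_of_tendsto_of_tendsto' (L.tendsto_step v u) (L.tendsto_apply v) fun k => ?_
  nlinarith [h k, L.l_lt_one k]

theorem value_s (v : V) : L.value (L.s v) = L.value v :=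
  le_antisymm (L.value_le_of_step_le fun k => (L.f_eq_s k v).ge)
    (L.value_le_of_le_step fun k => (L.f_eq_s k v).le)

theorem value_le_of_isMin (hv : G.isMin v) (hu : G.E v u) : L.value v ≤ L.value u :=
  L.value_le_of_le_step fun k => (congrFun (L.isFixedPt k) v).ge.trans (bellman_le_of_isMin hv hu)

theorem value_le_of_not_isMin (hv : ¬ G.isMin v) (hu : G.E v u) : L.value u ≤ L.value v :=
  L.value_le_of_step_le fun k =>
    (le_bellman_of_not_isMin hv hu).trans (congrFun (L.isFixedPt k) v).le

def minStrat : G.MinStrat := ⟨L.s, fun v _ => L.edge_s v⟩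

def maxStrat : G.MaxStrat := ⟨L.s, fun v _ => L.edge_s v⟩

theorem value_apply_le_of_consMin (hpath : G.IsPath π) (hcons : G.ConsMin L.minStrat π) (i : ℕ) :
    L.value (π i) ≤ L.value (π 0) := by
  induction i with
  | zero => rfl
  | succ i ih =>
    refine le_trans ?_ ih
    by_cases hv : G.isMin (π i)
    · rw [hcons i hv]
      exact (L.value_s (π i)).le
    · exact L.value_le_of_not_isMin hv (hpath i)

theorem value_le_apply_of_consMax (hpath : G.IsPath π) (hcons : G.ConsMax L.maxStrat π) (i : ℕ) :
    L.value (π 0) ≤ L.value (π i) := by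
  induction i with
  | zero => rfl
  | succ i ih =>
    refine ih.trans ?_
    by_cases hv : G.isMin (π i)
    · exact L.value_le_of_isMin hv (hpath i)
    · rw [hcons i hv]
      exact (L.value_s (π i)).ge

theorem wt_le_of_consMin (hpath : G.IsPath π) (hcons : G.ConsMin L.minStrat π) (k i : ℕ) :
    (G.wt (π i) (π (i + 1)) : ℝ) ≤ L.f k (π i) - L.l k * L.f k (π (i + 1)) := by
  by_cases hv : G.isMin (π i)
  · rw [hcons i hv, L.f_eq_s k (π i)]
    simp [minStrat]
  · linarith [(le_bellman_of_not_isMin hv (hpath i)).trans (congrFun (L.isFixedPt k) (π i)).le]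

theorem le_wt_of_consMax (hpath : G.IsPath π) (hcons : G.ConsMax L.maxStrat π) (k i : ℕ) :
    L.f k (π i) - L.l k * L.f k (π (i + 1)) ≤ G.wt (π i) (π (i + 1)) := by
  by_cases hv : G.isMin (π i)
  · linarith [(congrFun (L.isFixedPt k) (π i)).ge.trans (bellman_le_of_isMin hv (hpath i))]
  · rw [hcons i hv, L.f_eq_s k (π i)]
    simp [maxStrat]

theorem MPv_le_value {v : V} (π : G.PlaysMin L.minStrat v) :
    MPv (G.wseq π.1) ≤ L.value v := by
  obtain ⟨π, rfl, hpath, hcons⟩ := π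
  refine le_coe_of_forall_le_coe_add L.tendsto_dist fun k =>
    MPv_le_of_sum_le (C := 2 * ‖L.f k‖) fun K => ?_
  push_cast
  refine sum_range_le_of_le_sub_mul (L.wt_le_of_consMin hpath hcons k) (fun i => ?_)
    (fun i => norm_le_pi_norm (L.f k) (π i)) K
  linarith [(abs_le.1 (L.abs_sub_value_le k (π (i + 1)))).2,
    L.value_apply_le_of_consMin hpath hcons (i + 1)]

theorem value_le_MPv {v : V} (π : G.PlaysMax L.maxStrat v) :
    (L.value v : EReal) ≤ MPv (G.wseq π.1) := by
  obtain ⟨π, rfl, hpath, hcons⟩ := π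
  refine coe_le_of_forall_coe_sub_le L.tendsto_dist fun k =>
    le_MPv_of_le_sum (C := 2 * ‖L.f k‖) fun K => ?_
  push_cast
  refine le_sum_range_of_sub_mul_le (L.le_wt_of_consMax hpath hcons k) (fun i => ?_)
    (fun i => norm_le_pi_norm (L.f k) (π i)) K
  linarith [(abs_le.1 (L.abs_sub_value_le k (π (i + 1)))).1,
    L.value_le_apply_of_consMax hpath hcons (i + 1)]

end VanishingDiscountLimit

end VanishingDiscount

end Game

open Game

/-- Positional determinacy of mean-payoff games. -/
theorem mp_positional_determinacy {V : Type} [Fintype V] (G : Game V ℤ) :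
    ∃ (σ₀ : G.MinStrat) (τ₀ : G.MaxStrat), ∀ v : V,
      (⨆ π : G.PlaysMin σ₀ v, MPv (G.wseq π.1))
          = (⨅ σ : G.MinStrat, ⨆ π : G.PlaysMin σ v, MPv (G.wseq π.1)) ∧
      (⨅ σ : G.MinStrat, ⨆ π : G.PlaysMin σ v, MPv (G.wseq π.1))
          = (⨆ τ : G.MaxStrat, ⨅ π : G.PlaysMax τ v, MPv (G.wseq π.1)) ∧
      (⨆ τ : G.MaxStrat, ⨅ π : G.PlaysMax τ v, MPv (G.wseq π.1))
          = (⨅ π : G.PlaysMax τ₀ v, MPv (G.wseq π.1)) := by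
  obtain ⟨L⟩ := G.nonempty_vanishingDiscountLimit
  refine ⟨L.minStrat, L.maxStrat, fun v => ?_⟩
  have hσ₀ : ⨆ π : G.PlaysMin L.minStrat v, MPv (G.wseq π.1) ≤ L.value v :=
    iSup_le L.MPv_le_value
  have hτ₀ : (L.value v : EReal) ≤ ⨅ π : G.PlaysMax L.maxStrat v, MPv (G.wseq π.1) :=
    le_iInf L.value_le_MPv
  have hmin := iInf_le (fun σ => ⨆ π : G.PlaysMin σ v, MPv (G.wseq π.1)) L.minStrat
  have hmax := le_iSup (fun τ => ⨅ π : G.PlaysMax τ v, MPv (G.wseq π.1)) L.maxStrat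
  have hdual := G.iSup_iInf_le_iInf_iSup (fun π => MPv (G.wseq π)) v
  exact ⟨le_antisymm (hσ₀.trans (hτ₀.trans (hmax.trans hdual))) hmin,
    le_antisymm (hmin.trans (hσ₀.trans (hτ₀.trans hmax))) hdual,
    le_antisymm (hdual.trans (hmin.trans (hσ₀.trans hτ₀))) hmax⟩
end

section
/- Positional determinacy of energy games: for every game G = (V, E, w, V_Min, V_Max) with weights in ℤ ∪ {∞}, there exist a strategy σ₀ for Min and a strategy τ₀ for Max such that for every vertex v ∈ V, sup over infinite paths π from v consistent with σ₀ of En(w(π)) = inf over Min strategies σ of sup over infinite paths π from v consistent with σ of En(w(π)) = sup over Max strategies τ of inf over infinite paths π from v consistent with τ of En(w(π)) = inf over infinite paths π from v consistent with τ₀ of En(w(π)). -/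
attribute [local instance] Classical.propDecidable

open Game

/-!
For a positional Max strategy `τ`, let `maxValue τ v` be the least energy of a `τ`-play from `v`
(energies are taken in `ℕ∞`, where such infima are attained). Among the finitely many positional
Max strategies, take `τ₀` whose `maxValue` is maximal for the pointwise order.

Redirecting `τ` at a Max vertex `v` to an edge `v → u` with
`maxValue τ v < max 0 (w(v,u) + maxValue τ u)` does not decrease `maxValue` anywhere: along a play
of the new strategy, `maxValue τ` satisfies the one-step inequality `q ≤ max 0 (w + q')`, strictly
at `v`. Either the play visits `v` infinitely often, and these strict gains push the partial sums
above `maxValue τ` of the start, since `maxValue τ` is bounded on the finite vertex set; or it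
eventually follows `τ`, whose plays need at least `maxValue τ`.

Hence `max 0 (w(x,u) + maxValue τ₀ u) ≤ maxValue τ₀ x` along every edge `x → u` out of a Max
vertex, and along some edge out of each Min vertex (the first edge of an optimal play against
`τ₀`). The Min strategy `σ₀` taking these edges keeps the energy of every play below `maxValue τ₀`,
and weak duality (the play of `σ` against `τ`) closes the cycle
`inf_σ sup ≤ sup_{σ₀} ≤ maxValue τ₀ ≤ sup_τ inf ≤ inf_σ sup`.
-/

open Finset
open scoped ENNReal

theorem EReal.add_iSup_of_ne_bot {ι : Sort*} [Nonempty ι] {a : EReal} (ha : a ≠ ⊥)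
    {f : ι → EReal} (hf : ⨆ i, f i ≠ ⊥) : a + ⨆ i, f i = ⨆ i, a + f i :=
  Monotone.map_ciSup_of_continuousAt
    ((EReal.continuousAt_add (p := (a, ⨆ i, f i)) (Or.inr hf) (Or.inl ha)).comp
      (continuousAt_const.prodMk continuousAt_id)) fun _ _ h => by gcongr

theorem ENat.exists_natCast_le_of_le_iSup {ι : Sort*} [Nonempty ι] {f : ι → ℕ∞} {n : ℕ}
    (h : (n : ℕ∞) ≤ ⨆ i, f i) : ∃ i, (n : ℕ∞) ≤ f i := by
  rcases h.lt_or_eq with h | h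
  · obtain ⟨i, hi⟩ := lt_iSup_iff.mp h
    exact ⟨i, hi.le⟩
  · obtain ⟨i, hi⟩ := ENat.exists_eq_iSup_of_lt_top (h ▸ ENat.natCast_lt_top n)
    exact ⟨i, (hi.trans h.symm).ge⟩

theorem exists_le_sum_of_potential {z : ℕ → ℤ} {q : ℕ → ℕ} {visit : ℕ → Prop}
    [DecidablePred visit]
    (hstep : ∀ k, q k + (if visit k then 1 else 0) ≤ ((q (k + 1) : ℤ) + z k).toNat)
    (hbdd : BddAbove (Set.range q))
    (htail : ∀ K, (∀ i, K ≤ i → ¬ visit i) → ∃ j, q K ≤ (∑ i ∈ range j, z (K + i)).toNat) :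
    ∃ k, q 0 ≤ (∑ i ∈ range k, z i).toNat := by
  by_contra! hlt
  -- `hlt` keeps `hstep` off its truncated branch, so the gains at visits accumulate
  have inv (k : ℕ) : (q 0 : ℤ) + Nat.count visit k ≤ ∑ i ∈ range k, z i + q k := by
    induction k with
    | zero => simp
    | succ k ih =>
      have := hstep k
      have := hlt k
      rw [Nat.count_succ, sum_range_succ]
      split_ifs at * <;> omega
  rcases Set.finite_or_infinite (Set.ofPred visit) with hfin | hinf
  · obtain ⟨K, hK⟩ := hfin.bddAbove
    obtain ⟨j, hj⟩ := htail (K + 1) fun i hi hvi => by have := hK hvi; omega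
    have := inv (K + 1)
    have := hlt (K + 1)
    have := hlt (K + 1 + j)
    rw [sum_range_add] at this
    omega
  · obtain ⟨M, hM⟩ := hbdd
    have := Nat.count_nth_of_infinite hinf M
    have := inv (Nat.nth visit M)
    have := hlt (Nat.nth visit M)
    have := hM ⟨Nat.nth visit M, rfl⟩
    omega

namespace Game

@[simp] lemma toE_top : toE ⊤ = ⊤ := by simp [toE]

@[simp] lemma toE_coe (z : ℤ) : toE z = ((z : ℝ) : EReal) := by simp [toE]

@[simp] lemma toE_zero : toE 0 = 0 := by simpa using toE_coe 0

lemma toE_ne_bot (x : WithTop ℤ) : toE x ≠ ⊥ := by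
  induction x using WithTop.recTopCoe <;> simp

lemma toE_add (a b : WithTop ℤ) : toE (a + b) = toE a + toE b := by
  induction a using WithTop.recTopCoe with
  | top => simp [EReal.top_add_of_ne_bot (toE_ne_bot b)]
  | coe a =>
    induction b using WithTop.recTopCoe with
    | top => simp [EReal.add_top_of_ne_bot]
    | coe b => simp [← WithTop.coe_add]

lemma toE_sum {ι : Type*} (s : Finset ι) (f : ι → WithTop ℤ) :
    toE (∑ i ∈ s, f i) = ∑ i ∈ s, toE (f i) :=
  map_sum (⟨⟨toE, toE_zero⟩, toE_add⟩ : WithTop ℤ →+ EReal) f s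

@[simp] lemma wToN_top : wToN ⊤ = ⊤ := by simp [wToN]

@[simp] lemma wToN_coe (z : ℤ) : wToN z = (z.toNat : ℕ∞) := by simp [wToN]

@[simp] lemma wToN_zero : wToN 0 = 0 := by simpa using wToN_coe 0

lemma wToN_mono : Monotone wToN := by
  intro a b hab
  induction b using WithTop.recTopCoe with
  | top => simp
  | coe b =>
    lift a to ℤ using ne_top_of_le_ne_top WithTop.coe_ne_top hab
    simpa using Int.toNat_le_toNat (WithTop.coe_le_coe.mp hab)

lemma enatToE_eq_coe (x : ℕ∞) : enatToE x = ((x : ℝ≥0∞) : EReal) := by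
  induction x using ENat.recTopCoe with
  | top => simp [enatToE]
  | coe n => simp [enatToE]; norm_cast

lemma enatToE_strictMono : StrictMono enatToE := by
  rw [funext enatToE_eq_coe]
  exact EReal.coe_ennreal_strictMono.comp ENat.toENNReal_strictMono

lemma continuous_enatToE : Continuous enatToE := by
  rw [funext enatToE_eq_coe]
  exact continuous_coe_ennreal_ereal.comp ENat.continuous_toENNReal

lemma enatToE_iSup {ι : Sort*} [Nonempty ι] (f : ι → ℕ∞) :
    enatToE (⨆ i, f i) = ⨆ i, enatToE (f i) :=
  enatToE_strictMono.monotone.map_ciSup_of_continuousAt continuous_enatToE.continuousAt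

lemma enatToE_iInf {ι : Sort*} [Nonempty ι] (f : ι → ℕ∞) :
    enatToE (⨅ i, f i) = ⨅ i, enatToE (f i) :=
  enatToE_strictMono.monotone.map_ciInf_of_continuousAt continuous_enatToE.continuousAt

lemma toE_natCast (n : ℕ) : toE ((n : ℤ) : WithTop ℤ) = enatToE n := by
  rw [toE_coe]
  simp [enatToE]

lemma enatToE_wToN (x : WithTop ℤ) : enatToE (wToN x) = 0 ⊔ toE x := by
  induction x using WithTop.recTopCoe with
  | top => simp [enatToE]
  | coe z =>
    have h : (z.toNat : ℝ) = 0 ⊔ (z : ℝ) := by exact_mod_cast (by omega : (z.toNat : ℤ) = 0 ⊔ z)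
    simp only [wToN_coe, toE_coe, enatToE, ENat.natCast_ne_top, if_false, ENat.toNat_natCast, h]
    exact EReal.coe_strictMono.monotone.map_max

lemma En_eq_sup {w : ℕ → EReal} (h : w 0 ≠ ⊥) : En w = 0 ⊔ (w 0 + En fun i => w (i + 1)) := by
  have hpos : (⨆ k, ∑ i ∈ range k, w (i + 1)) ≠ ⊥ :=
    ne_bot_of_le_ne_bot EReal.zero_ne_bot (le_iSup_of_le 0 (by simp))
  rw [En, En, EReal.add_iSup_of_ne_bot h hpos, ← sup_iSup_nat_succ]
  simp only [sum_range_zero, sum_range_succ', add_comm]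

/-- `max 0 (w + x)`: the energy needed before an edge of weight `w` if `x` is needed after it. -/
noncomputable def energyStep (w : WithTop ℤ) (x : ℕ∞) : ℕ∞ :=
  if x = ⊤ then ⊤ else wToN (w + (x.toNat : ℤ))

@[simp] lemma energyStep_top_right (w : WithTop ℤ) : energyStep w ⊤ = ⊤ := if_pos rfl

@[simp] lemma energyStep_natCast (w : WithTop ℤ) (n : ℕ) :
    energyStep w n = wToN (w + (n : ℤ)) := by
  simp [energyStep]

@[simp] lemma energyStep_top_left (x : ℕ∞) : energyStep ⊤ x = ⊤ := by
  induction x using ENat.recTopCoe <;> simp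

lemma energyStep_mono (w : WithTop ℤ) : Monotone (energyStep w) := by
  intro x y hxy
  induction y using ENat.recTopCoe with
  | top => simp
  | coe n =>
    lift x to ℕ using ne_top_of_le_ne_top (ENat.natCast_ne_top n) hxy
    simp only [energyStep_natCast]
    exact wToN_mono (by gcongr; exact_mod_cast hxy)

lemma energyStep_coe_natCast (z : ℤ) (n : ℕ) : energyStep z n = ((n + z).toNat : ℕ∞) := by
  rw [energyStep_natCast, ← WithTop.coe_add, wToN_coe, add_comm]

lemma wToN_add_le_energyStep (w t : WithTop ℤ) : wToN (w + t) ≤ energyStep w (wToN t) := by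
  induction t using WithTop.recTopCoe with
  | top => simp
  | coe z =>
    rw [wToN_coe, energyStep_natCast]
    exact wToN_mono (by gcongr; exact_mod_cast Int.self_le_toNat z)

lemma eq_top_of_energyStep_eq_top {z : ℤ} {x : ℕ∞} (h : energyStep z x = ⊤) : x = ⊤ := by
  induction x using ENat.recTopCoe with
  | top => rfl
  | coe n => exact absurd ((energyStep_coe_natCast z n).symm.trans h) (ENat.natCast_ne_top _)

lemma enatToE_energyStep (w : WithTop ℤ) (x : ℕ∞) :
    enatToE (energyStep w x) = 0 ⊔ (toE w + enatToE x) := by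
  induction x using ENat.recTopCoe with
  | top => simp [enatToE, EReal.add_top_of_ne_bot (toE_ne_bot w)]
  | coe n => rw [energyStep_natCast, enatToE_wToN, toE_add, toE_natCast]

section Plays

variable {V R : Type} {G : Game V R}

def drop (K : ℕ) (π : ℕ → V) : ℕ → V := fun n => π (K + n)

@[simp] lemma drop_zero (π : ℕ → V) : drop 0 π = π := funext fun n => congrArg π (zero_add n)

lemma drop_drop (m n : ℕ) (π : ℕ → V) : drop m (drop n π) = drop (n + m) π :=
  funext fun _ => congrArg π (add_assoc n m _).symm

lemma IsPath.drop {π : ℕ → V} (h : G.IsPath π) (K : ℕ) : G.IsPath (drop K π) :=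
  fun i => h (K + i)

lemma ConsMin.drop {σ : G.MinStrat} {π : ℕ → V} (h : G.ConsMin σ π) (K : ℕ) :
    G.ConsMin σ (drop K π) :=
  fun i => h (K + i)

lemma ConsMax.drop {τ : G.MaxStrat} {π : ℕ → V} (h : G.ConsMax τ π) (K : ℕ) :
    G.ConsMax τ (drop K π) :=
  fun i => h (K + i)

variable (G)

noncomputable def outcome (σ : G.MinStrat) (τ : G.MaxStrat) (v : V) : ℕ → V :=
  fun n => (fun x => if G.isMin x then σ.1 x else τ.1 x)^[n] v

lemma outcome_succ (σ : G.MinStrat) (τ : G.MaxStrat) (v : V) (n : ℕ) :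
    G.outcome σ τ v (n + 1) =
      if G.isMin (G.outcome σ τ v n) then σ.1 (G.outcome σ τ v n) else τ.1 (G.outcome σ τ v n) :=
  Function.iterate_succ_apply' _ n v

lemma isPath_outcome (σ : G.MinStrat) (τ : G.MaxStrat) (v : V) :
    G.IsPath (G.outcome σ τ v) := by
  intro i
  rw [outcome_succ]
  split_ifs with h
  exacts [σ.2 _ h, τ.2 _ h]

lemma consMin_outcome (σ : G.MinStrat) (τ : G.MaxStrat) (v : V) :
    G.ConsMin σ (G.outcome σ τ v) :=
  fun i h => by rw [outcome_succ, if_pos h]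

lemma consMax_outcome (σ : G.MinStrat) (τ : G.MaxStrat) (v : V) :
    G.ConsMax τ (G.outcome σ τ v) :=
  fun i h => by rw [outcome_succ, if_neg h]

instance : Nonempty G.MinStrat :=
  ⟨⟨fun v => (G.nosink v).choose, fun v _ => (G.nosink v).choose_spec⟩⟩

instance : Nonempty G.MaxStrat :=
  ⟨⟨fun v => (G.nosink v).choose, fun v _ => (G.nosink v).choose_spec⟩⟩

instance (σ : G.MinStrat) (v : V) : Nonempty (G.PlaysMin σ v) :=
  ⟨⟨_, rfl, G.isPath_outcome σ (Classical.arbitrary _) v,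
    G.consMin_outcome σ (Classical.arbitrary _) v⟩⟩

instance (τ : G.MaxStrat) (v : V) : Nonempty (G.PlaysMax τ v) :=
  ⟨⟨_, rfl, G.isPath_outcome (Classical.arbitrary _) τ v,
    G.consMax_outcome (Classical.arbitrary _) τ v⟩⟩

lemma iInf_playsMax_le_iSup_playsMin {α : Type*} [CompleteLattice α] (f : (ℕ → V) → α)
    (σ : G.MinStrat) (τ : G.MaxStrat) (v : V) :
    ⨅ π : G.PlaysMax τ v, f π.1 ≤ ⨆ π : G.PlaysMin σ v, f π.1 :=
  (iInf_le _ ⟨_, rfl, G.isPath_outcome σ τ v, G.consMax_outcome σ τ v⟩).trans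
    (le_iSup (fun π : G.PlaysMin σ v => f π.1)
      ⟨_, rfl, G.isPath_outcome σ τ v, G.consMin_outcome σ τ v⟩)

noncomputable def switchAt (τ : G.MaxStrat) (v u : V) (hE : G.E v u) : G.MaxStrat :=
  ⟨Function.update τ.1 v u, fun x hx => by
    rcases eq_or_ne x v with rfl | h
    · simpa using hE
    · simpa [h] using τ.2 x hx⟩

@[simp] lemma switchAt_apply_self (τ : G.MaxStrat) {v u : V} (hE : G.E v u) :
    (G.switchAt τ v u hE).1 v = u := by
  simp [switchAt]

lemma switchAt_apply_of_ne (τ : G.MaxStrat) {v u x : V} (hE : G.E v u) (h : x ≠ v) :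
    (G.switchAt τ v u hE).1 x = τ.1 x := by
  simp [switchAt, h]

end Plays

variable {V : Type} (G : Game V (WithTop ℤ))

noncomputable def partialSum (π : ℕ → V) (k : ℕ) : WithTop ℤ := ∑ i ∈ range k, G.wseq π i

noncomputable def energy (π : ℕ → V) : ℕ∞ := ⨆ k, wToN (G.partialSum π k)

lemma wToN_partialSum_le_energy (π : ℕ → V) (k : ℕ) : wToN (G.partialSum π k) ≤ G.energy π :=
  le_iSup (fun k => wToN (G.partialSum π k)) k

lemma partialSum_succ (π : ℕ → V) (k : ℕ) :
    G.partialSum π (k + 1) = G.wt (π 0) (π 1) + G.partialSum (drop 1 π) k := by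
  simp only [partialSum, sum_range_succ', add_comm, wseq, drop]

lemma partialSum_eq_coe {π : ℕ → V} {z : ℕ → ℤ} (hz : ∀ i, G.wseq π i = z i) (k : ℕ) :
    G.partialSum π k = ((∑ i ∈ range k, z i : ℤ) : WithTop ℤ) := by
  simp only [partialSum, hz, WithTop.coe_sum]

lemma enatToE_energy (π : ℕ → V) : enatToE (G.energy π) = En fun i => toE (G.wseq π i) := by
  have hzero : (0 : EReal) ≤ ⨆ k, toE (G.partialSum π k) :=
    le_iSup_of_le 0 (by simp [partialSum])
  rw [energy, enatToE_iSup]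
  simp only [enatToE_wToN, ← sup_iSup]
  rw [sup_of_le_right hzero]
  simp only [En, partialSum, toE_sum]

lemma energy_eq_energyStep (π : ℕ → V) :
    G.energy π = energyStep (G.wt (π 0) (π 1)) (G.energy (drop 1 π)) :=
  enatToE_strictMono.injective <| by
    rw [enatToE_energyStep, enatToE_energy, enatToE_energy, En_eq_sup (toE_ne_bot _)]
    simp [wseq, drop, add_comm]

lemma energy_eq_top_of_drop {π : ℕ → V} {K : ℕ} (h : G.energy (drop K π) = ⊤) :
    G.energy π = ⊤ := by
  induction K with
  | zero => simpa using h
  | succ K ih =>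
    refine ih ?_
    rw [energy_eq_energyStep, drop_drop, h, energyStep_top_right]

lemma energy_eq_top_of_wt_eq_top {π : ℕ → V} {i : ℕ} (h : G.wt (π i) (π (i + 1)) = ⊤) :
    G.energy π = ⊤ :=
  G.energy_eq_top_of_drop (K := i) <| by
    rw [energy_eq_energyStep]
    simp [drop, h]

lemma energy_le_of_energyStep_le {f : V → ℕ∞} {π : ℕ → V}
    (hf : ∀ i, energyStep (G.wt (π i) (π (i + 1))) (f (π (i + 1))) ≤ f (π i)) :
    G.energy π ≤ f (π 0) := by
  refine iSup_le fun k => ?_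
  induction k generalizing π with
  | zero => simp [partialSum]
  | succ k ih =>
    calc wToN (G.partialSum π (k + 1))
        ≤ energyStep (G.wt (π 0) (π 1)) (wToN (G.partialSum (drop 1 π) k)) := by
          rw [partialSum_succ]
          exact wToN_add_le_energyStep _ _
      _ ≤ energyStep (G.wt (π 0) (π 1)) (f (π 1)) :=
          energyStep_mono _ (ih fun i => by simpa [drop, add_comm] using hf (1 + i))
      _ ≤ f (π 0) := hf 0

noncomputable def maxValue (τ : G.MaxStrat) (v : V) : ℕ∞ := ⨅ π : G.PlaysMax τ v, G.energy π.1

lemma maxValue_le_energy {τ : G.MaxStrat} {π : ℕ → V} (hpath : G.IsPath π)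
    (hcons : G.ConsMax τ π) : G.maxValue τ (π 0) ≤ G.energy π :=
  iInf_le (fun π : G.PlaysMax τ (π 0) => G.energy π.1) ⟨π, rfl, hpath, hcons⟩

lemma energyStep_maxValue_le_energy {τ : G.MaxStrat} {π : ℕ → V} (hpath : G.IsPath π)
    (hcons : G.ConsMax τ π) :
    energyStep (G.wt (π 0) (π 1)) (G.maxValue τ (π 1)) ≤ G.energy π := by
  rw [energy_eq_energyStep]
  exact energyStep_mono _ (G.maxValue_le_energy (hpath.drop 1) (hcons.drop 1))

lemma exists_energyStep_le_maxValue (τ : G.MaxStrat) (x : V) :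
    ∃ u, G.E x u ∧ energyStep (G.wt x u) (G.maxValue τ u) ≤ G.maxValue τ x := by
  obtain ⟨⟨π, rfl, hpath, hcons⟩, hπ⟩ :=
    ENat.exists_eq_iInf fun π : G.PlaysMax τ x => G.energy π.1
  exact ⟨π 1, hpath 0, (G.energyStep_maxValue_le_energy hpath hcons).trans_eq hπ⟩

lemma energyStep_le_maxValue {τ : G.MaxStrat} {x : V} (hx : ¬ G.isMin x) :
    energyStep (G.wt x (τ.1 x)) (G.maxValue τ (τ.1 x)) ≤ G.maxValue τ x :=
  le_iInf fun ⟨π, hπ0, hpath, hcons⟩ => by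
    subst hπ0
    rw [← hcons 0 hx]
    exact G.energyStep_maxValue_le_energy hpath hcons

lemma maxValue_le_energyStep {τ : G.MaxStrat} {x u : V} (hE : G.E x u)
    (h : G.isMin x ∨ u = τ.1 x) : G.maxValue τ x ≤ energyStep (G.wt x u) (G.maxValue τ u) := by
  obtain ⟨⟨π, hπ0, hpath, hcons⟩, hπ⟩ :=
    ENat.exists_eq_iInf fun π : G.PlaysMax τ u => G.energy π.1
  let ρ : ℕ → V := fun n => Nat.casesOn n x π
  have hρ : drop 1 ρ = π := funext fun n => by simp [drop, ρ, add_comm 1 n]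
  have hpath' : G.IsPath ρ := by
    rintro (_ | i)
    exacts [show G.E x (π 0) from hπ0 ▸ hE, hpath i]
  have hcons' : G.ConsMax τ ρ := by
    rintro (_ | i) hi
    exacts [hπ0.trans (h.resolve_left hi), hcons i hi]
  calc G.maxValue τ x ≤ G.energy ρ := G.maxValue_le_energy hpath' hcons'
    _ = energyStep (G.wt x u) (G.maxValue τ u) := by
      rw [energy_eq_energyStep, hρ]
      exact congrArg₂ energyStep (congrArg (G.wt x) hπ0) hπ

section Improvement

variable {G} {τ : G.MaxStrat} {v u : V}

lemma maxValue_le_energyStep_switchAt (hv : ¬ G.isMin v) (hE : G.E v u)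
    (himp : G.maxValue τ v < energyStep (G.wt v u) (G.maxValue τ u)) {π : ℕ → V}
    (hpath : G.IsPath π) (hcons : G.ConsMax (G.switchAt τ v u hE) π) (i : ℕ) :
    G.maxValue τ (π i) ≤ energyStep (G.wt (π i) (π (i + 1))) (G.maxValue τ (π (i + 1))) ∧
      (π i = v →
        G.maxValue τ (π i) < energyStep (G.wt (π i) (π (i + 1))) (G.maxValue τ (π (i + 1)))) := by
  by_cases hiv : π i = v
  · have hnext : π (i + 1) = u := by rw [hcons i (hiv ▸ hv), hiv, switchAt_apply_self]
    rw [hiv, hnext]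
    exact ⟨himp.le, fun _ => himp⟩
  · refine ⟨G.maxValue_le_energyStep (hpath i) ?_, fun h => absurd h hiv⟩
    by_cases hmin : G.isMin (π i)
    · exact .inl hmin
    · exact .inr ((hcons i hmin).trans (G.switchAt_apply_of_ne τ hE hiv))

lemma energy_eq_top_of_switchAt (hv : ¬ G.isMin v) (hE : G.E v u)
    (himp : G.maxValue τ v < energyStep (G.wt v u) (G.maxValue τ u)) {π : ℕ → V}
    (hpath : G.IsPath π) (hcons : G.ConsMax (G.switchAt τ v u hE) π)
    (htop : G.maxValue τ (π 0) = ⊤) : G.energy π = ⊤ := by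
  by_cases hwt : ∃ i, G.wt (π i) (π (i + 1)) = ⊤
  · obtain ⟨i, hi⟩ := hwt
    exact G.energy_eq_top_of_wt_eq_top hi
  push Not at hwt
  have hall (i : ℕ) : G.maxValue τ (π i) = ⊤ := by
    induction i with
    | zero => exact htop
    | succ i ih =>
      have hstep := (maxValue_le_energyStep_switchAt hv hE himp hpath hcons i).1
      rw [ih, top_le_iff, ← WithTop.coe_untop _ (hwt i)] at hstep
      exact eq_top_of_energyStep_eq_top hstep
  have hcons' : G.ConsMax τ π := fun i hi => by
    rw [hcons i hi, G.switchAt_apply_of_ne τ hE]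
    exact fun h => (ne_top_of_lt himp) (h ▸ hall i)
  simpa [htop] using G.maxValue_le_energy hpath hcons'

lemma maxValue_le_energy_of_switchAt [Finite V] (hv : ¬ G.isMin v) (hE : G.E v u)
    (himp : G.maxValue τ v < energyStep (G.wt v u) (G.maxValue τ u)) {π : ℕ → V}
    (hpath : G.IsPath π) (hcons : G.ConsMax (G.switchAt τ v u hE) π) :
    G.maxValue τ (π 0) ≤ G.energy π := by
  by_contra! hlt
  have hwt (i : ℕ) : G.wt (π i) (π (i + 1)) ≠ ⊤ := fun h => by
    simp [G.energy_eq_top_of_wt_eq_top h] at hlt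
  have hfin (K : ℕ) : G.maxValue τ (π K) ≠ ⊤ := fun h => by
    simp [G.energy_eq_top_of_drop
      (energy_eq_top_of_switchAt hv hE himp (hpath.drop K) (hcons.drop K) h)] at hlt
  set z : ℕ → ℤ := fun i => (G.wt (π i) (π (i + 1))).untop (hwt i)
  have hz (i : ℕ) : G.wt (π i) (π (i + 1)) = z i := (WithTop.coe_untop _ _).symm
  set q : ℕ → ℕ := fun k => (G.maxValue τ (π k)).toNat
  have hq (k : ℕ) : G.maxValue τ (π k) = q k := (ENat.natCast_toNat (hfin k)).symm
  have hstep (k : ℕ) : q k + (if π k = v then 1 else 0) ≤ ((q (k + 1) : ℤ) + z k).toNat := by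
    obtain ⟨hle, hlt'⟩ := maxValue_le_energyStep_switchAt hv hE himp hpath hcons k
    simp only [hq, hz, energyStep_coe_natCast, Nat.cast_le, Nat.cast_lt] at hle hlt'
    split_ifs with hkv
    · have := hlt' hkv
      omega
    · omega
  have htail (K : ℕ) (hK : ∀ i, K ≤ i → ¬ π i = v) :
      ∃ j, q K ≤ (∑ i ∈ range j, z (K + i)).toNat := by
    have hcons' : G.ConsMax τ (drop K π) := fun i hi =>
      (hcons.drop K i hi).trans (G.switchAt_apply_of_ne τ hE (hK (K + i) (Nat.le_add_right K i)))
    have hle : (q K : ℕ∞) ≤ ⨆ j, wToN (G.partialSum (drop K π) j) :=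
      hq K ▸ G.maxValue_le_energy (hpath.drop K) hcons'
    obtain ⟨j, hj⟩ := ENat.exists_natCast_le_of_le_iSup hle
    rw [G.partialSum_eq_coe (π := drop K π) (fun i => hz (K + i)), wToN_coe, Nat.cast_le] at hj
    exact ⟨j, hj⟩
  obtain ⟨k, hk⟩ := exists_le_sum_of_potential hstep
    ((Finite.bddAbove_range _).mono (Set.range_comp_subset_range π fun x => (G.maxValue τ x).toNat))
    htail
  have := G.wToN_partialSum_le_energy π k
  rw [G.partialSum_eq_coe hz, wToN_coe] at this
  exact hlt.not_ge ((hq 0).trans_le ((Nat.cast_le.mpr hk).trans this))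

lemma maxValue_le_maxValue_switchAt [Finite V] (hv : ¬ G.isMin v) (hE : G.E v u)
    (himp : G.maxValue τ v < energyStep (G.wt v u) (G.maxValue τ u)) :
    G.maxValue τ ≤ G.maxValue (G.switchAt τ v u hE) :=
  fun _ => le_iInf fun ⟨_, hπ0, hpath, hcons⟩ =>
    hπ0 ▸ maxValue_le_energy_of_switchAt hv hE himp hpath hcons

end Improvement

section Optimal

variable [Finite V]

lemma exists_maximal_maxValue :
    ∃ τ₀ : G.MaxStrat, ∀ τ, G.maxValue τ₀ ≤ G.maxValue τ → G.maxValue τ ≤ G.maxValue τ₀ := by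
  have : Finite G.MaxStrat :=
    Finite.of_injective (fun τ : G.MaxStrat => τ.1) fun _ _ => Subtype.ext
  obtain ⟨τ₀, -, h⟩ := Set.finite_univ.exists_maximalFor G.maxValue Set.univ
    ⟨Classical.arbitrary _, trivial⟩
  exact ⟨τ₀, fun τ => h trivial⟩

noncomputable def optMaxStrat : G.MaxStrat := G.exists_maximal_maxValue.choose

lemma energyStep_le_maxValue_optMaxStrat {x u : V} (hx : ¬ G.isMin x) (hE : G.E x u) :
    energyStep (G.wt x u) (G.maxValue G.optMaxStrat u) ≤ G.maxValue G.optMaxStrat x := by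
  by_contra! himp
  have hle := maxValue_le_maxValue_switchAt hx hE himp
  have heq := le_antisymm (G.exists_maximal_maxValue.choose_spec _ hle) hle
  have := G.energyStep_le_maxValue (τ := G.switchAt G.optMaxStrat x u hE) hx
  rw [switchAt_apply_self, heq] at this
  exact this.not_gt himp

noncomputable def optMinStrat : G.MinStrat :=
  ⟨fun x => (G.exists_energyStep_le_maxValue G.optMaxStrat x).choose,
    fun x _ => (G.exists_energyStep_le_maxValue G.optMaxStrat x).choose_spec.1⟩

lemma energy_le_maxValue_optMaxStrat {π : ℕ → V} (hpath : G.IsPath π)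
    (hcons : G.ConsMin G.optMinStrat π) : G.energy π ≤ G.maxValue G.optMaxStrat (π 0) :=
  G.energy_le_of_energyStep_le fun i => by
    by_cases hmin : G.isMin (π i)
    · rw [hcons i hmin]
      exact (G.exists_energyStep_le_maxValue _ _).choose_spec.2
    · exact G.energyStep_le_maxValue_optMaxStrat hmin (hpath i)

lemma iSup_energy_optMinStrat_le (v : V) :
    ⨆ π : G.PlaysMin G.optMinStrat v, G.energy π.1 ≤ G.maxValue G.optMaxStrat v :=
  iSup_le fun π => by
    obtain ⟨π, rfl, hpath, hcons⟩ := π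
    exact G.energy_le_maxValue_optMaxStrat hpath hcons

end Optimal

end Game

/-- Positional determinacy of energy games. -/
theorem en_positional_determinacy {V : Type} [Fintype V] (G : Game V (WithTop ℤ)) :
    ∃ (σ₀ : G.MinStrat) (τ₀ : G.MaxStrat), ∀ v : V,
      (⨆ π : G.PlaysMin σ₀ v, En (fun i => toE (G.wseq π.1 i)))
          = (⨅ σ : G.MinStrat, ⨆ π : G.PlaysMin σ v, En (fun i => toE (G.wseq π.1 i))) ∧
      (⨅ σ : G.MinStrat, ⨆ π : G.PlaysMin σ v, En (fun i => toE (G.wseq π.1 i)))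
          = (⨆ τ : G.MaxStrat, ⨅ π : G.PlaysMax τ v, En (fun i => toE (G.wseq π.1 i))) ∧
      (⨆ τ : G.MaxStrat, ⨅ π : G.PlaysMax τ v, En (fun i => toE (G.wseq π.1 i)))
          = (⨅ π : G.PlaysMax τ₀ v, En (fun i => toE (G.wseq π.1 i))) := by
  refine ⟨G.optMinStrat, G.optMaxStrat, fun v => ?_⟩
  simp only [← enatToE_energy, ← enatToE_iSup, ← enatToE_iInf]
  have hBA := iInf_le (fun σ => ⨆ π : G.PlaysMin σ v, G.energy π.1) G.optMinStrat
  have hAD := G.iSup_energy_optMinStrat_le v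
  have hDC := le_iSup (fun τ => G.maxValue τ v) G.optMaxStrat
  have hCB : ⨆ τ, G.maxValue τ v ≤ ⨅ σ, ⨆ π : G.PlaysMin σ v, G.energy π.1 :=
    iSup_le fun τ => le_iInf fun σ => G.iInf_playsMax_le_iSup_playsMin _ σ τ v
  exact ⟨congrArg _ (le_antisymm (hAD.trans (hDC.trans hCB)) hBA),
    congrArg _ (le_antisymm (hBA.trans (hAD.trans hDC)) hCB),
    congrArg _ (le_antisymm (hCB.trans (hBA.trans hAD)) hDC)⟩
end

section
/- Let G = (V, E, w, V_Min, V_Max) be a game with integer weights and n = |V|, and let G' = (V, E, w', V_Min, V_Max) be the game with weights w'(e) = (n+1)·w(e) − 1. Then G' is simple (every simple cycle of G' has nonzero sum of weights), and for every vertex v, MP_{G'}(v) > 0 if and only if MP_G(v) > 0. -/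
attribute [local instance] Classical.propDecidable

/-!
A simple cycle of `G` has some length `q` with `1 ≤ q ≤ n`, and its weight in `G'` is
`(n + 1) s - q`, where `s` is its weight in `G`; this is never `0` and has the sign of `s`.

Fix a Min strategy `σ`. Some `σ`-play from `v` has positive mean payoff iff some `σ`-play from `v`
traverses a simple cycle of positive weight. Indeed, if every simple cycle along a play is
nonpositive, cutting them out of any finite prefix leaves a simple path, so the partial sums are
bounded by `n · W` and the mean payoff is `≤ 0`. Conversely, the lasso that follows the play to the
cycle and then turns around it forever is again consistent with `σ` (it only uses edges of the
play) and has mean payoff at least `s / q > 0`. As Min has finitely many strategies,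
`MP_G(v) > 0` iff every `σ` admits such a play; so positivity only depends on the signs of the
simple cycles, which `G` and `G'` share.
-/

open Filter Finset Topology

namespace Game

variable {V R : Type}

def pathSum [AddCommMonoid R] (w : V → V → R) (ρ : ℕ → V) (k : ℕ) : R :=
  ∑ i ∈ range k, w (ρ i) (ρ (i + 1))

lemma pathSum_add [AddCommMonoid R] (w : V → V → R) (ρ : ℕ → V) (a b : ℕ) :
    pathSum w ρ (a + b) = pathSum w ρ a + pathSum w (fun i => ρ (a + i)) b := by
  simp only [pathSum, sum_range_add, add_assoc]

lemma pathSum_congr [AddCommMonoid R] {w : V → V → R} {ρ ρ' : ℕ → V} {k : ℕ}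
    (h : ∀ i ≤ k, ρ i = ρ' i) : pathSum w ρ k = pathSum w ρ' k :=
  sum_congr rfl fun i hi => by
    have := mem_range.1 hi
    rw [h i (by omega), h (i + 1) (by omega)]

lemma pathSum_affine (c : ℤ) (w : V → V → ℤ) (ρ : ℕ → V) (k : ℕ) :
    pathSum (fun u v => c * w u v - 1) ρ k = c * pathSum w ρ k - k := by
  simp [pathSum, sum_sub_distrib, mul_sum]

lemma le_card_of_injective_lt [Fintype V] {ρ : ℕ → V} {q : ℕ}
    (h : ∀ i < q, ∀ j < q, ρ i = ρ j → i = j) : q ≤ Fintype.card V := by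
  simpa using Fintype.card_le_of_injective (fun i : Fin q => ρ i)
    fun i j hij => Fin.ext (h i i.isLt j j.isLt hij)

def IsSimpleCycleOf (Ed : V → V → Prop) (ρ : ℕ → V) (q : ℕ) : Prop :=
  1 ≤ q ∧ (∀ i < q, Ed (ρ i) (ρ (i + 1))) ∧ ρ q = ρ 0 ∧ ∀ i < q, ∀ j < q, ρ i = ρ j → i = j

lemma exists_simple_subcycle (ρ : ℕ → V) {d : ℕ} :
    ∀ {i : ℕ}, 1 ≤ d → ρ (i + d) = ρ i →
      ∃ a e, i ≤ a ∧ a + e ≤ i + d ∧ 1 ≤ e ∧ ρ (a + e) = ρ a ∧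
        ∀ p < e, ∀ p' < e, ρ (a + p) = ρ (a + p') → p = p' := by
  induction d using Nat.strong_induction_on with
  | _ d ih =>
  intro i hd hρ
  by_cases hinj : ∀ p < d, ∀ p' < d, ρ (i + p) = ρ (i + p') → p = p'
  · exact ⟨i, d, le_rfl, le_rfl, hd, hρ, hinj⟩
  push Not at hinj
  obtain ⟨p, hp, p', hp', hpp', hne⟩ := hinj
  wlog hlt : p < p' generalizing p p'
  · exact this p' hp' p hp hpp'.symm hne.symm (by omega)
  have hrep : ρ (i + p + (p' - p)) = ρ (i + p) := by
    rw [show i + p + (p' - p) = i + p' by omega, hpp']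
  obtain ⟨a, e, hia, hae, he⟩ := ih (p' - p) (by omega) (by omega) hrep
  exact ⟨a, e, by omega, by omega, he⟩

def skipLoop (ρ : ℕ → V) (a d : ℕ) : ℕ → V := fun m => if m ≤ a then ρ m else ρ (m + d)

lemma skipLoop_of_le {ρ : ℕ → V} {a d m : ℕ} (h : m ≤ a) : skipLoop ρ a d m = ρ m := if_pos h

lemma skipLoop_add {ρ : ℕ → V} {a d : ℕ} (hρ : ρ (a + d) = ρ a) (i : ℕ) :
    skipLoop ρ a d (a + i) = ρ (a + d + i) := by
  unfold skipLoop
  split_ifs with h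
  · obtain rfl : i = 0 := by omega
    simpa using hρ.symm
  · congr 1; omega

lemma pathSum_eq_skipLoop_add [AddCommMonoid R] (w : V → V → R) {ρ : ℕ → V} {a d : ℕ}
    (hρ : ρ (a + d) = ρ a) (r : ℕ) :
    pathSum w ρ (a + d + r) =
      pathSum w (skipLoop ρ a d) (a + r) + pathSum w (fun i => ρ (a + i)) d := by
  rw [pathSum_add, pathSum_add, pathSum_add, funext (skipLoop_add hρ),
    pathSum_congr fun i hi => skipLoop_of_le hi]
  abel

lemma skipLoop_edges {Ed : V → V → Prop} {ρ : ℕ → V} {a d r : ℕ} (hρ : ρ (a + d) = ρ a)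
    (hEd : ∀ i < a + d + r, Ed (ρ i) (ρ (i + 1))) :
    ∀ i < a + r, Ed (skipLoop ρ a d i) (skipLoop ρ a d (i + 1)) := by
  intro i hi
  rcases Nat.lt_or_ge i a with h | h
  · rw [skipLoop_of_le h.le, skipLoop_of_le h]
    exact hEd i (by omega)
  · obtain ⟨j, rfl⟩ := Nat.exists_eq_add_of_le h
    rw [skipLoop_add hρ, show a + j + 1 = a + (j + 1) by omega, skipLoop_add hρ]
    exact hEd (a + d + j) (by omega)

lemma pathSum_le_of_simpleCycle_nonpos [Fintype V] {Ed : V → V → Prop} {w : V → V → ℤ}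
    {W : ℤ} (hW0 : 0 ≤ W) (hW : ∀ x y, Ed x y → w x y ≤ W)
    (hcyc : ∀ ρ q, IsSimpleCycleOf Ed ρ q → pathSum w ρ q ≤ 0) (k : ℕ) :
    ∀ ρ : ℕ → V, (∀ i < k, Ed (ρ i) (ρ (i + 1))) → pathSum w ρ k ≤ Fintype.card V * W := by
  induction k using Nat.strong_induction_on with
  | _ k ih =>
  intro ρ hρ
  by_cases hinj : ∀ i < k + 1, ∀ j < k + 1, ρ i = ρ j → i = j
  · have hk : k + 1 ≤ Fintype.card V := le_card_of_injective_lt hinj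
    calc pathSum w ρ k ≤ ∑ _i ∈ range k, W :=
          sum_le_sum fun i hi => hW _ _ (hρ i (mem_range.1 hi))
      _ = k * W := by simp
      _ ≤ Fintype.card V * W := by gcongr; omega
  push Not at hinj
  obtain ⟨i, hi, j, hj, hij, hne⟩ := hinj
  wlog hlt : i < j generalizing i j
  · exact this j hj i hi hij.symm hne.symm (by omega)
  obtain ⟨a, d, -, had, hd, hloop, hsimple⟩ :=
    exists_simple_subcycle ρ (d := j - i) (by omega) (by rw [Nat.add_sub_cancel' hlt.le, hij])
  obtain ⟨r, rfl⟩ : ∃ r, k = a + d + r := ⟨k - (a + d), by omega⟩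
  have hcycle : IsSimpleCycleOf Ed (fun p => ρ (a + p)) d :=
    ⟨hd, fun p hp => hρ (a + p) (by omega), hloop, hsimple⟩
  -- the simple loop `ρ a → ⋯ → ρ (a + d)` weighs at most `0`; cut it out and recurse
  rw [pathSum_eq_skipLoop_add w hloop]
  linarith [ih (a + r) (by omega) _ (skipLoop_edges hloop hρ), hcyc _ _ hcycle]

lemma MPv_nonpos_of_sum_le {x : ℕ → ℤ} {B : ℤ} (h : ∀ k, ∑ i ∈ range k, x i ≤ B) :
    MPv x ≤ 0 := by
  have hlim : Tendsto (fun k : ℕ => (((B : ℝ) / k : ℝ) : EReal)) atTop (𝓝 0) := by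
    simpa using EReal.tendsto_coe.2 (tendsto_const_div_atTop_nhds_zero_nat (B : ℝ))
  refine (limsup_le_limsup (Eventually.of_forall fun k => ?_)).trans_eq hlim.limsup_eq
  exact EReal.coe_le_coe_iff.2 (div_le_div_of_nonneg_right (by exact_mod_cast h k) k.cast_nonneg)

lemma MPv_pos_of_sum_eq {x : ℕ → ℤ} {m q : ℕ} {C s : ℤ} (hq : 0 < q) (hs : 0 < s)
    (h : ∀ t : ℕ, ∑ i ∈ range (m + t * q), x i = C + t * s) : 0 < MPv x := by
  have hqR : (0 : ℝ) < q := by exact_mod_cast hq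
  have hlim : Tendsto (fun t : ℕ => ((C + t * s : ℝ) / (m + t * q))) atTop (𝓝 (s / q)) := by
    have hnum := (tendsto_const_div_atTop_nhds_zero_nat (C : ℝ)).add_const (s : ℝ)
    have hden := (tendsto_const_div_atTop_nhds_zero_nat (m : ℝ)).add_const (q : ℝ)
    rw [zero_add] at hnum hden
    refine (hnum.div hden hqR.ne').congr' ?_
    filter_upwards [eventually_ne_atTop 0] with t ht
    have htR : (t : ℝ) ≠ 0 := by exact_mod_cast ht
    simp only [Pi.div_apply]
    field_simp
  have hsub : Tendsto (fun t : ℕ => m + t * q) atTop atTop :=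
    tendsto_atTop_mono (fun t => (Nat.le_mul_of_pos_right t hq).trans (Nat.le_add_left _ _))
      tendsto_id
  calc (0 : EReal) < ((s / q : ℝ) : EReal) := EReal.coe_pos.2 (div_pos (by exact_mod_cast hs) hqR)
    _ = limsup ((fun k : ℕ => ((((∑ i ∈ range k, x i : ℤ) : ℝ) / k : ℝ) : EReal)) ∘
          fun t : ℕ => m + t * q) atTop := by
        refine (Tendsto.limsup_eq ?_).symm
        refine EReal.tendsto_coe.2 (hlim.congr fun t => ?_)
        simp only [h]
        push_cast; ring_nf
    _ ≤ MPv x := hsub.limsup_comp_le_limsup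

def EdgeOf (π : ℕ → V) (x y : V) : Prop := ∃ t, π t = x ∧ π (t + 1) = y

lemma exists_simpleCycle_pos_of_MPv_pos [Fintype V] {w : V → V → ℤ} {π : ℕ → V}
    (h : 0 < MPv fun i => w (π i) (π (i + 1))) :
    ∃ ρ q, IsSimpleCycleOf (EdgeOf π) ρ q ∧ 0 < pathSum w ρ q := by
  by_contra! hcyc
  set W := ∑ p : V × V, |w p.1 p.2|
  have hW (x y : V) : w x y ≤ W :=
    (le_abs_self _).trans (single_le_sum (f := fun p : V × V => |w p.1 p.2|)
      (fun _ _ => abs_nonneg _) (mem_univ (x, y)))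
  refine h.not_ge (MPv_nonpos_of_sum_le (B := Fintype.card V * W) fun k => ?_)
  exact pathSum_le_of_simpleCycle_nonpos (sum_nonneg fun _ _ => abs_nonneg _)
    (fun x y _ => hW x y) hcyc k π fun i _ => ⟨i, rfl, rfl⟩

lemma isPath_consMin_of_edgeOf {G : Game V R} {σ : G.MinStrat} {π π' : ℕ → V}
    (hπ : G.IsPath π) (hσ : G.ConsMin σ π) (h : ∀ i, EdgeOf π (π' i) (π' (i + 1))) :
    G.IsPath π' ∧ G.ConsMin σ π' := by
  refine ⟨fun i => ?_, fun i hi => ?_⟩ <;> obtain ⟨t, ht, ht'⟩ := h i <;> rw [← ht, ← ht']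
  · exact hπ t
  · exact hσ t (ht ▸ hi)

lemma apply_succ_mod_of_closed {ρ : ℕ → V} {q : ℕ} (hq : 0 < q) (hcl : ρ q = ρ 0) (j : ℕ) :
    ρ ((j + 1) % q) = ρ (j % q + 1) := by
  rw [← Nat.mod_add_mod]
  rcases Nat.lt_or_ge (j % q + 1) q with h | h
  · rw [Nat.mod_eq_of_lt h]
  · rw [le_antisymm (Nat.mod_lt j hq) h, Nat.mod_self, hcl]

def lasso (π ρ : ℕ → V) (m q : ℕ) : ℕ → V := fun i => if i < m then π i else ρ ((i - m) % q)

lemma lasso_of_le {π ρ : ℕ → V} {m q i : ℕ} (hm : π m = ρ 0) (hi : i ≤ m) :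
    lasso π ρ m q i = π i := by
  unfold lasso
  split_ifs with h
  · rfl
  · rw [show i = m by omega, Nat.sub_self, Nat.zero_mod, hm]

lemma lasso_add (π ρ : ℕ → V) (m q j : ℕ) : lasso π ρ m q (m + j) = ρ (j % q) := by
  simp [lasso]

lemma edgeOf_lasso {π ρ : ℕ → V} {m q : ℕ} (hq : 0 < q) (hm : π m = ρ 0) (hcl : ρ q = ρ 0)
    (hρ : ∀ i < q, EdgeOf π (ρ i) (ρ (i + 1))) (i : ℕ) :
    EdgeOf π (lasso π ρ m q i) (lasso π ρ m q (i + 1)) := by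
  rcases Nat.lt_or_ge i m with h | h
  · exact ⟨i, (lasso_of_le hm h.le).symm, (lasso_of_le hm h).symm⟩
  · obtain ⟨j, rfl⟩ := Nat.exists_eq_add_of_le h
    rw [lasso_add, add_assoc, lasso_add, apply_succ_mod_of_closed hq hcl]
    exact hρ _ (Nat.mod_lt j hq)

lemma pathSum_periodic [AddCommMonoid R] (w : V → V → R) {ρ : ℕ → V} {q : ℕ} (hcl : ρ q = ρ 0)
    (t : ℕ) : pathSum w (fun j => ρ (j % q)) (t * q) = t • pathSum w ρ q := by
  induction t with
  | zero => simp [pathSum]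
  | succ t ih =>
    rw [add_mul, one_mul, pathSum_add, ih, succ_nsmul]
    congr 1
    refine pathSum_congr fun i hi => ?_
    rcases hi.lt_or_eq with h | rfl
    · simp [Nat.mod_eq_of_lt h]
    · simp [hcl]

lemma pathSum_lasso [AddCommMonoid R] (w : V → V → R) {π ρ : ℕ → V} {m q : ℕ}
    (hm : π m = ρ 0) (hcl : ρ q = ρ 0) (t : ℕ) :
    pathSum w (lasso π ρ m q) (m + t * q) = pathSum w π m + t • pathSum w ρ q := by
  rw [pathSum_add, pathSum_congr fun i hi => lasso_of_le hm hi, funext (lasso_add π ρ m q),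
    pathSum_periodic w hcl]

lemma exists_play_MPv_pos_of_cycle {G : Game V R} {σ : G.MinStrat} {v : V} (π : G.PlaysMin σ v)
    {w : V → V → ℤ} {ρ : ℕ → V} {q : ℕ} (hq : 1 ≤ q) (hcl : ρ q = ρ 0)
    (hρ : ∀ i < q, EdgeOf π.1 (ρ i) (ρ (i + 1))) (hpos : 0 < pathSum w ρ q) :
    ∃ π' : G.PlaysMin σ v, 0 < MPv fun i => w (π'.1 i) (π'.1 (i + 1)) := by
  obtain ⟨m, hm, -⟩ := hρ 0 hq
  obtain ⟨hπ0, hπ, hσ⟩ := π.2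
  refine ⟨⟨lasso π.1 ρ m q, (lasso_of_le hm m.zero_le).trans hπ0,
    isPath_consMin_of_edgeOf hπ hσ (edgeOf_lasso hq hm hcl hρ)⟩, ?_⟩
  refine MPv_pos_of_sum_eq (m := m) (C := pathSum w π.1 m) hq hpos fun t => ?_
  rw [← nsmul_eq_mul]
  exact pathSum_lasso w hm hcl t

theorem exists_play_MPv_pos_congr [Fintype V] (G : Game V R) (σ : G.MinStrat) (v : V)
    {w w' : V → V → ℤ}
    (h : ∀ ρ q, 1 ≤ q → q ≤ Fintype.card V → (0 < pathSum w ρ q ↔ 0 < pathSum w' ρ q)) :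
    (∃ π : G.PlaysMin σ v, 0 < MPv fun i => w (π.1 i) (π.1 (i + 1))) ↔
      ∃ π : G.PlaysMin σ v, 0 < MPv fun i => w' (π.1 i) (π.1 (i + 1)) := by
  suffices key : ∀ {w w' : V → V → ℤ},
      (∀ ρ q, 1 ≤ q → q ≤ Fintype.card V → 0 < pathSum w ρ q → 0 < pathSum w' ρ q) →
      (∃ π : G.PlaysMin σ v, 0 < MPv fun i => w (π.1 i) (π.1 (i + 1))) →
      ∃ π : G.PlaysMin σ v, 0 < MPv fun i => w' (π.1 i) (π.1 (i + 1)) from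
    ⟨key fun ρ q h1 h2 => (h ρ q h1 h2).1, key fun ρ q h1 h2 => (h ρ q h1 h2).2⟩
  rintro w w' h ⟨π, hπ⟩
  obtain ⟨ρ, q, ⟨hq, hρ, hcl, hinj⟩, hpos⟩ := exists_simpleCycle_pos_of_MPv_pos hπ
  exact exists_play_MPv_pos_of_cycle π hq hcl hρ (h ρ q hq (le_card_of_injective_lt hinj) hpos)

lemma MPVal_pos_iff [Finite V] (G : Game V ℤ) (v : V) :
    0 < MPVal G v ↔ ∀ σ : G.MinStrat, ∃ π : G.PlaysMin σ v, 0 < MPv (G.wseq π.1) := by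
  have : Finite G.MinStrat := Subtype.finite
  have : Nonempty G.MinStrat :=
    ⟨⟨fun u => (G.nosink u).choose, fun u _ => (G.nosink u).choose_spec⟩⟩
  refine ⟨fun h σ => lt_iSup_iff.1 (h.trans_le (iInf_le _ σ)), fun h => ?_⟩
  obtain ⟨σ, hσ⟩ := exists_eq_ciInf_of_finite (f := fun σ : G.MinStrat =>
    ⨆ π : G.PlaysMin σ v, MPv (G.wseq π.1))
  rw [MPVal, ← hσ]
  exact lt_iSup_iff.2 (h σ)

lemma succ_mul_sub_pos_iff {n q : ℕ} {s : ℤ} (hqn : q ≤ n) :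
    0 < (n + 1 : ℤ) * s - q ↔ 0 < s := by
  have : (q : ℤ) ≤ n := by exact_mod_cast hqn
  constructor <;> intro h <;> nlinarith

lemma succ_mul_sub_ne_zero {n q : ℕ} {s : ℤ} (hq : 1 ≤ q) (hqn : q ≤ n) :
    (n + 1 : ℤ) * s - q ≠ 0 := by
  have : (q : ℤ) ≤ n := by exact_mod_cast hqn
  have : (1 : ℤ) ≤ q := by exact_mod_cast hq
  rcases le_or_gt s 0 with h | h <;> nlinarith

end Game

open Game

/-- Reduction to a simple game: the game with weights `(n+1)·w − 1` is simple and has the same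
vertices of positive mean-payoff value. -/
theorem lifting_simplicity {V : Type} [Fintype V] (G G' : Game V ℤ)
    (hG' : G' = { G with wt := fun u v => ((Fintype.card V : ℤ) + 1) * G.wt u v - 1 }) :
    IsSimpleR G' ∧ ∀ v : V, (0 < MPVal G' v ↔ 0 < MPVal G v) := by
  subst hG'
  refine ⟨fun ρ k hρ => ?_, fun v => ?_⟩
  · change pathSum (fun u v => ((Fintype.card V : ℤ) + 1) * G.wt u v - 1) ρ k ≠ 0
    rw [pathSum_affine]
    exact succ_mul_sub_ne_zero hρ.1 (le_card_of_injective_lt hρ.2.2.2)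
  · rw [MPVal_pos_iff, MPVal_pos_iff]
    exact forall_congr' fun σ => exists_play_MPv_pos_congr G σ v fun ρ q _ hqn => by
      rw [pathSum_affine]
      exact succ_mul_sub_pos_iff hqn
end
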